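/- Let m be a positive integer and p a prime not dividing m. Then in the polynomial ring (ZMod p)[X] one has (-X)^m · ∑_{n=1}^{p-1} ((-m)⁻¹)^n · T_n(X) = -X^p · ∑_{l=0}^{m-1} ((m-1)!/l!) · (-X)^l, where T_n(X) denotes the image in (ZMod p)[X] of the n-th Touchard polynomial and (m-1)!/l! is the integer ∏_{s=l+1}^{m-1} s. -/

import Mathlib

/-!
Let `D f = X (f + f')`, so that `Tₙ₊₁ = D Tₙ`. The linear map `Xⁿ ↦ Tₙ` turns multiplication
by `X` into `D`, hence sends the falling factorial `(X)ₖ` to `Xᵏ`; as `(X)ₚ = Xᵖ - X` over `𝔽ₚ`,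
this gives Touchard's congruence `Tₚ = Xᵖ + X`. With `c = (-m)⁻¹` and `cᵖ = c`, shifting the
index of `F = ∑_{n=1}^{p-1} cⁿ Tₙ` gives `D F + m F = Xᵖ`. Both sides of the identity are then
sent by `D` to `Xᵖ (-X)ᵐ`, and `D` is injective since `f + f'` has the leading coefficient of `f`.
-/

open Polynomial

/-- The Touchard polynomials in `ℤ[X]`, determined by `touchard 0 = 1` and
`touchard (n+1) = X * ∑_{k=0}^{n} C(n,k) * touchard k`. -/
noncomputable def touchard : ℕ → ℤ[X]
  | 0 => 1
  | n + 1 => X * ∑ k ∈ (Finset.range (n + 1)).attach, (n.choose k : ℤ[X]) * touchard k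
decreasing_by exact Finset.mem_range.mp k.2

open Finset

lemma touchard_zero : touchard 0 = 1 := by
  rw [touchard]

lemma touchard_succ (n : ℕ) :
    touchard (n + 1) = X * ∑ k ∈ range (n + 1), (n.choose k : ℤ[X]) * touchard k := by
  rw [touchard, sum_attach (range (n + 1)) fun k ↦ (n.choose k : ℤ[X]) * touchard k]

lemma touchard_add_derivative (n : ℕ) :
    touchard n + derivative (touchard n) =
      ∑ k ∈ range (n + 1), (n.choose k : ℤ[X]) * touchard k := by
  induction n using Nat.strong_induction_on with
  | _ n ih =>
    obtain _ | n := n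
    · simp [touchard_zero]
    set S : ℕ → ℤ[X] := fun j ↦ ∑ k ∈ range (j + 1), (j.choose k : ℤ[X]) * touchard k
    have hS : ∑ k ∈ range (n + 2), ((n + 1).choose k : ℤ[X]) * touchard k =
        S n + X * ∑ k ∈ range (n + 1), (n.choose k : ℤ[X]) * S k := by
      rw [sum_choose_succ_mul (fun i _ ↦ touchard i), mul_sum]
      simp only [touchard_succ, S, mul_left_comm (X : ℤ[X])]
    have hS' : derivative (S n) =
        ∑ k ∈ range (n + 1), (n.choose k : ℤ[X]) * (S k - touchard k) := by
      simp only [S, derivative_sum, derivative_natCast_mul]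
      refine sum_congr rfl fun k hk ↦ ?_
      rw [← ih k (by simpa [Nat.lt_succ_iff] using hk), add_sub_cancel_left]
    rw [hS, touchard_succ, derivative_mul, derivative_X, one_mul]
    change X * S n + (S n + X * derivative (S n)) = _
    rw [hS']
    simp only [mul_sub, sum_sub_distrib, S]
    ring

lemma touchard_succ_eq_X_mul (n : ℕ) :
    touchard (n + 1) = X * (touchard n + derivative (touchard n)) := by
  rw [touchard_add_derivative, touchard_succ]

section CommRing

variable (R : Type*) [CommRing R]

noncomputable def touchardOp : R[X] →ₗ[R] R[X] :=
  LinearMap.mulLeft R X ∘ₗ (LinearMap.id + derivative)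

noncomputable def touchardUmbral : R[X] →ₗ[R] R[X] :=
  lsum fun n ↦ LinearMap.toSpanSingleton R R[X] ((touchard n).map (Int.castRingHom R))

/-- `m! ∑_{l ≤ m} (-X)ˡ / l!`, a rescaled truncation of `exp (-X)`. -/
noncomputable def expNegTrunc (m : ℕ) : R[X] :=
  ∑ l ∈ range (m + 1), C ((∏ s ∈ Icc (l + 1) m, s : ℕ) : R) * (-X) ^ l

variable {R}

lemma touchardOp_apply (f : R[X]) : touchardOp R f = X * (f + derivative f) := rfl

lemma touchardOp_mul (q f : R[X]) :
    touchardOp R (q * f) = q * touchardOp R f + X * derivative q * f := by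
  simp only [touchardOp_apply, derivative_mul]
  ring

lemma touchardOp_injective : Function.Injective (touchardOp R) := by
  refine (injective_iff_map_eq_zero _).2 fun f hf ↦ ?_
  have hsum : f + derivative f = 0 := isRegular_X.left (hf.trans (mul_zero X).symm)
  have hlead := congrArg (coeff · f.natDegree) hsum
  simp only [coeff_add, coeff_derivative, coeff_natDegree_succ_eq_zero, zero_mul, add_zero,
    coeff_zero] at hlead
  exact leadingCoeff_eq_zero.1 hlead

lemma X_mul_derivative_pow {q : R[X]} (hq : X * derivative q = q) (k : ℕ) :
    X * derivative (q ^ k) = (k : R[X]) * q ^ k := by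
  induction k with
  | zero => simp
  | succ k ih =>
    rw [pow_succ, derivative_mul, mul_add, ← mul_assoc, ih, mul_left_comm, hq]
    push_cast
    ring

lemma map_touchard_succ (n : ℕ) :
    (touchard (n + 1)).map (Int.castRingHom R) =
      touchardOp R ((touchard n).map (Int.castRingHom R)) := by
  rw [touchard_succ_eq_X_mul, Polynomial.map_mul, Polynomial.map_add, ← derivative_map,
    Polynomial.map_X, touchardOp_apply]

lemma map_touchard_one : (touchard 1).map (Int.castRingHom R) = X := by
  simp [map_touchard_succ, touchard_zero, touchardOp_apply]

lemma touchardUmbral_monomial (n : ℕ) (a : R) :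
    touchardUmbral R (monomial n a) = a • (touchard n).map (Int.castRingHom R) := by
  simp [touchardUmbral]

lemma touchardUmbral_X_pow (n : ℕ) :
    touchardUmbral R (X ^ n) = (touchard n).map (Int.castRingHom R) := by
  rw [← monomial_one_right_eq_X_pow, touchardUmbral_monomial, one_smul]

lemma touchardUmbral_X_mul (f : R[X]) :
    touchardUmbral R (X * f) = touchardOp R (touchardUmbral R f) := by
  change (touchardUmbral R ∘ₗ LinearMap.mulLeft R X) f = (touchardOp R ∘ₗ touchardUmbral R) f
  congr 1
  refine lhom_ext' fun n ↦ LinearMap.ext fun a ↦ ?_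
  simp [touchardUmbral_monomial, X_mul_monomial, map_touchard_succ]

lemma touchardUmbral_descPochhammer (k : ℕ) :
    touchardUmbral R (descPochhammer R k) = X ^ k := by
  induction k with
  | zero => simpa [touchard_zero] using touchardUmbral_X_pow (R := R) 0
  | succ k ih =>
    rw [descPochhammer_succ_right, mul_sub, mul_comm _ X, map_sub, touchardUmbral_X_mul, ih,
      ← C_eq_natCast, mul_comm _ (C _), ← smul_eq_C_mul, map_smul, ih, touchardOp_apply, mul_add,
      X_mul_derivative_pow (by simp) k, smul_eq_C_mul, C_eq_natCast]
    ring

lemma touchardOp_sum_Icc (c : R) (N : ℕ) :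
    C c * touchardOp R (∑ n ∈ Icc 1 N, C (c ^ n) * (touchard n).map (Int.castRingHom R)) =
      ∑ n ∈ Icc 1 N, C (c ^ n) * (touchard n).map (Int.castRingHom R) - C c * X +
        C (c ^ (N + 1)) * (touchard (N + 1)).map (Int.castRingHom R) := by
  induction N with
  | zero => simp [map_touchard_one]
  | succ N ih =>
    rw [sum_Icc_succ_top (by omega), map_add, mul_add, ih, touchardOp_mul, derivative_C,
      ← map_touchard_succ, pow_succ' c (N + 1), C_mul]
    ring

lemma expNegTrunc_succ (m : ℕ) :
    expNegTrunc R (m + 1) = ((m + 1 : ℕ) : R[X]) * expNegTrunc R m + (-X) ^ (m + 1) := by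
  rw [expNegTrunc, sum_range_succ, Icc_eq_empty (by omega), prod_empty, Nat.cast_one, C_1,
    one_mul, expNegTrunc, mul_sum]
  congr 1
  refine sum_congr rfl fun l hl ↦ ?_
  rw [prod_Icc_succ_top (by simp at hl; omega), Nat.cast_mul, C_mul, C_eq_natCast, C_eq_natCast]
  ring

lemma expNegTrunc_add_derivative (m : ℕ) :
    expNegTrunc R m + derivative (expNegTrunc R m) = (-X) ^ m := by
  induction m with
  | zero => simp [expNegTrunc]
  | succ m ih =>
    rw [expNegTrunc_succ, derivative_add, derivative_natCast_mul, derivative_pow_succ,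
      derivative_neg, derivative_X, ← Nat.cast_succ, map_natCast]
    linear_combination ((m + 1 : ℕ) : R[X]) * ih

end CommRing

section ZMod

variable {p : ℕ} [Fact p.Prime]

lemma descPochhammer_zmod_self : descPochhammer (ZMod p) p = X ^ p - X := by
  have hp := (Fact.out : p.Prime).one_lt
  have hdesc : IsMonicOfDegree (descPochhammer (ZMod p) p) p :=
    ⟨descPochhammer_natDegree _ p, monic_descPochhammer _ p⟩
  have hfrob : IsMonicOfDegree (X ^ p - X : (ZMod p)[X]) p :=
    (isMonicOfDegree_X_pow (R := ZMod p) p).sub (natDegree_X_le.trans_lt hp)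
  refine sub_eq_zero.1 <| eq_zero_of_natDegree_lt_card_of_eval_eq_zero _
    (f := id) Function.injective_id (fun a ↦ ?_) ?_
  · rw [id, eval_sub, descPochhammer_eval_eq_prod_range, eval_sub, eval_pow, eval_X,
      ZMod.pow_card, sub_self, sub_zero]
    exact prod_eq_zero (mem_range.2 a.val_lt) (by rw [ZMod.natCast_zmod_val, sub_self])
  · rw [ZMod.card]
    exact hdesc.natDegree_sub_lt (by omega) hfrob

theorem map_touchard_prime : (touchard p).map (Int.castRingHom (ZMod p)) = X ^ p + X := by
  have hX : touchardUmbral (ZMod p) X = X := by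
    simpa [map_touchard_one] using touchardUmbral_X_pow (R := ZMod p) 1
  have hfrob : (X ^ p : (ZMod p)[X]) = descPochhammer (ZMod p) p + X := by
    rw [descPochhammer_zmod_self, sub_add_cancel]
  conv_lhs => rw [← touchardUmbral_X_pow, hfrob, map_add, touchardUmbral_descPochhammer, hX]

lemma touchardOp_sum_Icc_zmod {m : ℕ} (hpm : ¬ p ∣ m) :
    touchardOp (ZMod p) (∑ n ∈ Icc 1 (p - 1),
        C (((-(m : ZMod p))⁻¹) ^ n) * (touchard n).map (Int.castRingHom (ZMod p))) =
      X ^ p - C (m : ZMod p) * ∑ n ∈ Icc 1 (p - 1),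
        C (((-(m : ZMod p))⁻¹) ^ n) * (touchard n).map (Int.castRingHom (ZMod p)) := by
  set c : ZMod p := (-(m : ZMod p))⁻¹
  set F := ∑ n ∈ Icc 1 (p - 1), C (c ^ n) * (touchard n).map (Int.castRingHom (ZMod p))
  have hmc : C (m : ZMod p) * C c = -1 := by
    rw [← C_mul, ← neg_neg (m : ZMod p), neg_mul, mul_inv_cancel₀, C_neg, C_1]
    simpa [ZMod.natCast_eq_zero_iff] using hpm
  have key := touchardOp_sum_Icc c (p - 1)
  rw [Nat.sub_add_cancel (Fact.out : p.Prime).one_le, ZMod.pow_card, map_touchard_prime] at key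
  linear_combination (-C (m : ZMod p)) * key + (touchardOp (ZMod p) F - X ^ p) * hmc

end ZMod

theorem touchard_sum_poly_general (m : ℕ) (p : ℕ) (hp : p.Prime) (hpm : ¬ p ∣ m) :
    (-(X : (ZMod p)[X])) ^ m *
        ∑ n ∈ Finset.Icc 1 (p - 1),
          C (((-(m : ZMod p))⁻¹) ^ n) * (touchard n).map (Int.castRingHom (ZMod p))
      = -(X : (ZMod p)[X]) ^ p *
          ∑ l ∈ Finset.range m,
            C (((∏ s ∈ Finset.Icc (l + 1) (m - 1), s : ℕ) : ZMod p)) *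
              (-(X : (ZMod p)[X])) ^ l := by
  have := Fact.mk hp
  obtain _ | m := m
  · exact absurd (dvd_zero p) hpm
  rw [Nat.add_sub_cancel]
  change _ = -X ^ p * expNegTrunc (ZMod p) m
  apply touchardOp_injective
  have hE : touchardOp (ZMod p) (expNegTrunc (ZMod p) m) = X * (-X) ^ m := by
    rw [touchardOp_apply, expNegTrunc_add_derivative]
  rw [touchardOp_mul, touchardOp_sum_Icc_zmod hpm, X_mul_derivative_pow (by simp),
    touchardOp_mul, hE, derivative_neg, mul_neg, X_mul_derivative_pow (by simp),
    CharP.cast_eq_zero (ZMod p)[X] p, map_natCast]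
  push_cast
  ring

theorem touchard_sum_poly (m : ℕ) (hm : 0 < m) (p : ℕ) (hp : p.Prime) (hpm : ¬ p ∣ m) :
    (-(X : (ZMod p)[X])) ^ m *
        ∑ n ∈ Finset.Icc 1 (p - 1),
          C (((-(m : ZMod p))⁻¹) ^ n) * (touchard n).map (Int.castRingHom (ZMod p))
      = -(X : (ZMod p)[X]) ^ p *
          ∑ l ∈ Finset.range m,
            C (((∏ s ∈ Finset.Icc (l + 1) (m - 1), s : ℕ) : ZMod p)) *
              (-(X : (ZMod p)[X])) ^ l :=
  touchard_sum_poly_general m p hp hpm
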